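/- arXiv:2311.16418 — 3 statements merged into one kernel-verified Lean document; each statement's English description precedes it below -/
import Mathlib

section
/- Let Cₙ ↔ fₙ : [a,b] → ℝ^M (n = 1, 2, …) and C ↔ f : [a,b] → ℝ^M be curves (a < b), and assume fₙ converges pointwise to f on [a,b]. Then ℓ(C) ≤ liminf_{n→∞} ℓ(Cₙ) (lower semicontinuity of length under pointwise convergence). -/
open scoped BigOperators ENNReal
open MeasureTheory Filter

noncomputable section

/-- A partition `a = x 0 < x 1 < ⋯ < x n = b` of the interval `[a,b]`. -/
structure IntervalPartition (a b : ℝ) where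
  n : ℕ
  x : Fin (n + 1) → ℝ
  mono : StrictMono x
  first : x 0 = a
  last : x (Fin.last n) = b

/-- The mesh `‖P‖ = maxᵢ (xᵢ − xᵢ₋₁)` of a partition. -/
def IntervalPartition.mesh {a b : ℝ} (P : IntervalPartition a b) : ℝ :=
  ⨆ i : Fin P.n, (P.x i.succ - P.x i.castSucc)

/-- The inscribed sum `V(f;P) = Σᵢ ‖f(xᵢ) − f(xᵢ₋₁)‖`. -/
def inscribedSum {M : ℕ} (f : ℝ → EuclideanSpace ℝ (Fin M)) {a b : ℝ}
    (P : IntervalPartition a b) : ℝ :=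
  ∑ i : Fin P.n, ‖f (P.x i.succ) - f (P.x i.castSucc)‖

/-- The length `ℓ(C)` of the curve `C ↔ f : [a,b] → ℝ^M`: the supremum of the inscribed sums
over all partitions of `[a,b]`, a value in `[0,+∞]`. -/
def curveLength {M : ℕ} (f : ℝ → EuclideanSpace ℝ (Fin M)) (a b : ℝ) : ℝ≥0∞ :=
  ⨆ P : IntervalPartition a b, ENNReal.ofReal (inscribedSum f P)

/-- The total variation `T_h[a,b]` of a real function `h` on `[a,b]`. -/
def totalVariation (h : ℝ → ℝ) (a b : ℝ) : ℝ≥0∞ :=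
  ⨆ P : IntervalPartition a b, ENNReal.ofReal (∑ i : Fin P.n, |h (P.x i.succ) - h (P.x i.castSucc)|)

/-- The positive variation `T_h⁺[a,b]` of a real function `h` on `[a,b]`. -/
def posVariation (h : ℝ → ℝ) (a b : ℝ) : ℝ≥0∞ :=
  ⨆ P : IntervalPartition a b,
    ENNReal.ofReal (∑ i : Fin P.n, max (h (P.x i.succ) - h (P.x i.castSucc)) 0)

/-- The negative variation `T_h⁻[a,b]` of a real function `h` on `[a,b]`. -/
def negVariation (h : ℝ → ℝ) (a b : ℝ) : ℝ≥0∞ :=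
  ⨆ P : IntervalPartition a b,
    ENNReal.ofReal (∑ i : Fin P.n, max (h (P.x i.castSucc) - h (P.x i.succ)) 0)

/-- `h` is absolutely continuous on `[a,b]`: for every `ε > 0` there is `δ > 0` such that
`Σᵢ |h(vᵢ) − h(uᵢ)| < ε` for every finite family of pairwise non-overlapping subintervals
`[uᵢ,vᵢ]` of `[a,b]` of total length `< δ`. -/
def AbsContOn (h : ℝ → ℝ) (a b : ℝ) : Prop :=
  ∀ ε > (0 : ℝ), ∃ δ > (0 : ℝ), ∀ n : ℕ, ∀ u v : Fin n → ℝ,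
    (∀ i, a ≤ u i ∧ u i ≤ v i ∧ v i ≤ b) →
    (∀ i j, i ≠ j → Set.Ioo (u i) (v i) ∩ Set.Ioo (u j) (v j) = ∅) →
    (∑ i, (v i - u i)) < δ → (∑ i, |h (v i) - h (u i)|) < ε

/-- `φ` is an increasing homeomorphism of `[a,b]` onto `[c,d]` sending `a` to `c` and `b` to `d`. -/
def IsIncrHomeo (φ : ℝ → ℝ) (a b c d : ℝ) : Prop :=
  ContinuousOn φ (Set.Icc a b) ∧ StrictMonoOn φ (Set.Icc a b) ∧ φ a = c ∧ φ b = d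

/-- `f : [a,b] → ℝ^M` and `g : [c,d] → ℝ^M` are Fréchet equivalent. -/
def FrechetEquiv {M : ℕ} (f : ℝ → EuclideanSpace ℝ (Fin M)) (a b : ℝ)
    (g : ℝ → EuclideanSpace ℝ (Fin M)) (c d : ℝ) : Prop :=
  ∀ ε > (0 : ℝ), ∃ φ : ℝ → ℝ, IsIncrHomeo φ a b c d ∧
    ∀ x ∈ Set.Icc a b, ‖f x - g (φ x)‖ < ε

/-- The Fréchet distance between the curves `C ↔ f : [a,b] → ℝ^M` and `D ↔ g : [c,d] → ℝ^M`. -/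
def frechetDist {M : ℕ} (f : ℝ → EuclideanSpace ℝ (Fin M)) (a b : ℝ)
    (g : ℝ → EuclideanSpace ℝ (Fin M)) (c d : ℝ) : ℝ :=
  ⨅ φ : {φ : ℝ → ℝ // IsIncrHomeo φ a b c d}, ⨆ x ∈ Set.Icc a b, ‖f x - g (φ.1 x)‖

/-- A parametric integrand: a continuous `F : ℝ^M × ℝ^M → ℝ` positively homogeneous of
degree 1 in the second variable. -/
def IsParametricIntegrand {M : ℕ}
    (F : EuclideanSpace ℝ (Fin M) → EuclideanSpace ℝ (Fin M) → ℝ) : Prop :=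
  Continuous (fun p : EuclideanSpace ℝ (Fin M) × EuclideanSpace ℝ (Fin M) => F p.1 p.2) ∧
  ∀ K : ℝ, 0 ≤ K → ∀ x t, F x (K • t) = K * F x t

/-- `L` is the line integral `∫_C F` of `F` along the curve `C ↔ f : [a,b] → ℝ^M`:
the limit, as the mesh tends to `0`, of the Riemann-type sums
`Σᵢ F(f(ξᵢ), f(xᵢ) − f(xᵢ₋₁))` over tagged partitions of `[a,b]`. -/
def IsLineIntegral {M : ℕ} (F : EuclideanSpace ℝ (Fin M) → EuclideanSpace ℝ (Fin M) → ℝ)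
    (f : ℝ → EuclideanSpace ℝ (Fin M)) (a b : ℝ) (L : ℝ) : Prop :=
  ∀ ε > (0 : ℝ), ∃ δ > (0 : ℝ), ∀ P : IntervalPartition a b, P.mesh < δ →
    ∀ ξ : Fin P.n → ℝ, (∀ i, ξ i ∈ Set.Icc (P.x i.castSucc) (P.x i.succ)) →
    |(∑ i : Fin P.n, F (f (ξ i)) (f (P.x i.succ) - f (P.x i.castSucc))) - L| < ε

theorem IntervalPartition.x_mem_Icc {a b : ℝ} (P : IntervalPartition a b) (i : Fin (P.n + 1)) :
    P.x i ∈ Set.Icc a b :=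
  ⟨by simpa only [P.first] using P.mono.monotone (Fin.zero_le i),
    by simpa only [P.last] using P.mono.monotone (Fin.le_last i)⟩

theorem ofReal_inscribedSum_le_curveLength {M : ℕ} (f : ℝ → EuclideanSpace ℝ (Fin M)) {a b : ℝ}
    (P : IntervalPartition a b) : ENNReal.ofReal (inscribedSum f P) ≤ curveLength f a b :=
  le_iSup (fun Q => ENNReal.ofReal (inscribedSum f Q)) P

theorem tendsto_inscribedSum {M : ℕ} {ι : Type*} {l : Filter ι} {a b : ℝ}
    {fn : ι → ℝ → EuclideanSpace ℝ (Fin M)} {f : ℝ → EuclideanSpace ℝ (Fin M)}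
    (hconv : ∀ t ∈ Set.Icc a b, Tendsto (fun n => fn n t) l (nhds (f t)))
    (P : IntervalPartition a b) :
    Tendsto (fun n => inscribedSum (fn n) P) l (nhds (inscribedSum f P)) :=
  tendsto_finsetSum _ fun _ _ =>
    ((hconv _ (P.x_mem_Icc _)).sub (hconv _ (P.x_mem_Icc _))).norm

theorem length_le_liminf_of_pointwise_general {M : ℕ} (a b : ℝ)
    (fn : ℕ → ℝ → EuclideanSpace ℝ (Fin M)) (f : ℝ → EuclideanSpace ℝ (Fin M))
    (hconv : ∀ t ∈ Set.Icc a b, Tendsto (fun n => fn n t) atTop (nhds (f t))) :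
    curveLength f a b ≤ liminf (fun n => curveLength (fn n) a b) atTop := by
  refine iSup_le fun P => ?_
  have hsum : Tendsto (fun n => ENNReal.ofReal (inscribedSum (fn n) P)) atTop
      (nhds (ENNReal.ofReal (inscribedSum f P))) :=
    ENNReal.tendsto_ofReal (tendsto_inscribedSum hconv P)
  calc ENNReal.ofReal (inscribedSum f P)
      = liminf (fun n => ENNReal.ofReal (inscribedSum (fn n) P)) atTop := hsum.liminf_eq.symm
    _ ≤ liminf (fun n => curveLength (fn n) a b) atTop :=
        liminf_le_liminf (.of_forall fun n => ofReal_inscribedSum_le_curveLength (fn n) P)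

/-- Lower semicontinuity of length under pointwise convergence: if `fₙ → f`
pointwise on `[a,b]`, then `ℓ(C) ≤ liminfₙ ℓ(Cₙ)`. -/
theorem length_le_liminf_of_pointwise {M : ℕ} (a b : ℝ) (hab : a < b)
    (fn : ℕ → ℝ → EuclideanSpace ℝ (Fin M)) (f : ℝ → EuclideanSpace ℝ (Fin M))
    (hconv : ∀ t ∈ Set.Icc a b, Tendsto (fun n => fn n t) atTop (nhds (f t))) :
    curveLength f a b ≤ liminf (fun n => curveLength (fn n) a b) atTop :=
  length_le_liminf_of_pointwise_general a b fn f hconv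

end
end

section
/- Let C ↔ f : [a,b] → ℝ^M (a < b) be a continuous and rectifiable curve with components f₁, …, f_M, and let s(x) = ℓ of f restricted to [a,x] be its arc length function. Then s is absolutely continuous on [a,b] if and only if every component f₁, …, f_M is absolutely continuous on [a,b]. -/
open scoped BigOperators ENNReal
open MeasureTheory Filter

noncomputable section

/-! The length of `f` on `[x, y]` is Mathlib's variation `eVariationOn f (Icc x y)`, so
additivity of the variation gives `s y - s x = ℓ(f on [x, y]) ≥ ‖f y - f x‖ ≥ |f_m y - f_m x|`,
which transfers absolute continuity from `s` to every component. Conversely `ℓ ≤ Σ_m var(f_m)`,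
and the variation of an absolutely continuous real function is small on every non-overlapping
family of intervals of small total length: subdividing each interval of the family by an
arbitrary partition gives again such a family, to which the definition of absolute continuity
applies. -/

open scoped Topology

namespace IntervalPartition

variable {a b c : ℝ}

def refl (a : ℝ) : IntervalPartition a a where
  n := 0
  x _ := a
  mono := Fin.strictMono_iff_lt_succ.2 fun i => i.elim0
  first := rfl
  last := rfl

def toSeq (P : IntervalPartition a b) (k : ℕ) : ℝ := P.x (Fin.clamp k P.n)

theorem toSeq_of_le (P : IntervalPartition a b) {k : ℕ} (hk : k ≤ P.n) :
    P.toSeq k = P.x ⟨k, Nat.lt_succ_of_le hk⟩ :=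
  congrArg P.x (Fin.ext (min_eq_left hk))

theorem toSeq_self (P : IntervalPartition a b) : P.toSeq P.n = b :=
  (toSeq_of_le P le_rfl).trans P.last

theorem monotone_toSeq (P : IntervalPartition a b) : Monotone P.toSeq :=
  fun _ _ hkl => P.mono.monotone (Fin.mk_le_mk.2 (min_le_min_right _ hkl))

theorem toSeq_lt_toSeq_succ (P : IntervalPartition a b) {k : ℕ} (hk : k < P.n) :
    P.toSeq k < P.toSeq (k + 1) := by
  rw [toSeq_of_le P hk.le, toSeq_of_le P hk]
  exact P.mono (Fin.mk_lt_mk.2 k.lt_succ_self)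

theorem toSeq_mem_Icc (P : IntervalPartition a b) (k : ℕ) : P.toSeq k ∈ Set.Icc a b :=
  ⟨P.first.ge.trans (P.mono.monotone (Fin.zero_le _)),
    (P.mono.monotone (Fin.le_last _)).trans P.last.le⟩

def snoc (P : IntervalPartition a b) (hbc : b < c) : IntervalPartition a c where
  n := P.n + 1
  x i := if (i : ℕ) ≤ P.n then P.toSeq i else c
  mono := Fin.strictMono_iff_lt_succ.2 fun i => by
    have hi : (i : ℕ) ≤ P.n := Nat.lt_succ_iff.1 i.isLt
    simp only [Fin.val_castSucc, Fin.val_succ, if_pos hi]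
    split_ifs with h
    · exact P.toSeq_lt_toSeq_succ h
    · rwa [show (i : ℕ) = P.n by omega, toSeq_self]
  first := by simp [toSeq_of_le, P.first]
  last := by simp

theorem toSeq_snoc (P : IntervalPartition a b) (hbc : b < c) (k : ℕ) :
    (P.snoc hbc).toSeq k = if k ≤ P.n then P.toSeq k else c := by
  change (if min k (P.n + 1) ≤ P.n then P.toSeq (min k (P.n + 1)) else c) = _
  by_cases hk : k ≤ P.n
  · rw [if_pos (by omega), if_pos hk, min_eq_left (by omega)]
  · rw [if_neg (by omega), if_neg hk]

end IntervalPartition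

section inscribedSum

variable {M : ℕ} (f : ℝ → EuclideanSpace ℝ (Fin M)) {a b c : ℝ}

theorem inscribedSum_eq_sum_range (P : IntervalPartition a b) :
    inscribedSum f P = ∑ k ∈ Finset.range P.n, ‖f (P.toSeq (k + 1)) - f (P.toSeq k)‖ := by
  rw [inscribedSum, ← Fin.sum_univ_eq_sum_range]
  refine Finset.sum_congr rfl fun i _ => ?_
  rw [P.toSeq_of_le i.isLt, P.toSeq_of_le i.isLt.le]
  rfl

theorem inscribedSum_refl : inscribedSum f (IntervalPartition.refl a) = 0 := by
  simp [inscribedSum, IntervalPartition.refl]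

theorem inscribedSum_snoc (P : IntervalPartition a b) (hbc : b < c) :
    inscribedSum f (P.snoc hbc) = inscribedSum f P + ‖f c - f b‖ := by
  rw [inscribedSum_eq_sum_range, inscribedSum_eq_sum_range]
  change ∑ k ∈ Finset.range (P.n + 1), _ = _
  rw [Finset.sum_range_succ]
  simp only [IntervalPartition.toSeq_snoc, le_refl, if_pos, P.toSeq_self,
    if_neg (Nat.not_succ_le_self P.n)]
  congr 1
  refine Finset.sum_congr rfl fun k hk => ?_
  have hk : k + 1 ≤ P.n := Finset.mem_range.1 hk
  rw [if_pos hk, if_pos (Nat.le_of_succ_le hk)]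

end inscribedSum

section curveLength

variable {M : ℕ} (f : ℝ → EuclideanSpace ℝ (Fin M)) {a b c : ℝ}

theorem IntervalPartition.exists_inscribedSum_eq_add (P : IntervalPartition a b) (hbc : b ≤ c) :
    ∃ Q : IntervalPartition a c, inscribedSum f Q = inscribedSum f P + ‖f c - f b‖ := by
  rcases hbc.lt_or_eq with hbc | rfl
  · exact ⟨P.snoc hbc, inscribedSum_snoc f P hbc⟩
  · exact ⟨P, by simp⟩

theorem exists_sum_range_le_inscribedSum {w : ℕ → ℝ} (hw : Monotone w) (ha : a ≤ w 0) (N : ℕ) :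
    ∃ P : IntervalPartition a (w N),
      ∑ k ∈ Finset.range N, ‖f (w (k + 1)) - f (w k)‖ ≤ inscribedSum f P := by
  induction N with
  | zero =>
    obtain ⟨P, hP⟩ := (IntervalPartition.refl a).exists_inscribedSum_eq_add f ha
    exact ⟨P, by simp [hP, inscribedSum_refl]⟩
  | succ N ih =>
    obtain ⟨P, hP⟩ := ih
    obtain ⟨Q, hQ⟩ := P.exists_inscribedSum_eq_add f (hw N.le_succ)
    exact ⟨Q, by rw [Finset.sum_range_succ, hQ]; linarith⟩

theorem curveLength_eq_eVariationOn (a b : ℝ) :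
    curveLength f a b = eVariationOn f (Set.Icc a b) := by
  apply le_antisymm
  · refine iSup_le fun P => ?_
    rw [inscribedSum_eq_sum_range, ENNReal.ofReal_sum_of_nonneg fun _ _ => norm_nonneg _]
    simp only [← dist_eq_norm, ← edist_dist]
    exact eVariationOn.sum_le P.monotone_toSeq P.toSeq_mem_Icc
  · refine iSup_le fun ⟨N, w, hw, hmem⟩ => ?_
    obtain ⟨P, hP⟩ := exists_sum_range_le_inscribedSum f hw (hmem 0).1 N
    obtain ⟨Q, hQ⟩ := P.exists_inscribedSum_eq_add f (hmem N).2
    calc ∑ k ∈ Finset.range N, edist (f (w (k + 1))) (f (w k))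
        = ENNReal.ofReal (∑ k ∈ Finset.range N, ‖f (w (k + 1)) - f (w k)‖) := by
          rw [ENNReal.ofReal_sum_of_nonneg fun _ _ => norm_nonneg _]
          simp only [edist_dist, dist_eq_norm]
      _ ≤ ENNReal.ofReal (inscribedSum f Q) :=
          ENNReal.ofReal_le_ofReal (by linarith [norm_nonneg (f b - f (w N))])
      _ ≤ curveLength f a b := le_iSup (fun Q => ENNReal.ofReal (inscribedSum f Q)) Q

end curveLength

theorem EuclideanSpace.norm_le_sum_norm {ι : Type*} [Fintype ι] (x : EuclideanSpace ℝ ι) :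
    ‖x‖ ≤ ∑ i, ‖x i‖ := by
  rw [EuclideanSpace.norm_eq, Real.sqrt_le_left (by positivity)]
  exact Finset.sum_sq_le_sq_sum_of_nonneg fun i _ => norm_nonneg (x i)

theorem EuclideanSpace.edist_le_sum_edist {ι : Type*} [Fintype ι] (x y : EuclideanSpace ℝ ι) :
    edist x y ≤ ∑ i, edist (x i) (y i) := by
  simp only [edist_dist, dist_eq_norm]
  rw [← ENNReal.ofReal_sum_of_nonneg fun i _ => norm_nonneg _]
  exact ENNReal.ofReal_le_ofReal (EuclideanSpace.norm_le_sum_norm (x - y))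

theorem eVariationOn_le_sum_eVariationOn_apply {α ι : Type*} [LinearOrder α] [Fintype ι]
    (f : α → EuclideanSpace ℝ ι) (s : Set α) :
    eVariationOn f s ≤ ∑ i, eVariationOn (fun t => f t i) s := by
  refine iSup_le fun ⟨N, w, hw, hws⟩ => ?_
  calc ∑ k ∈ Finset.range N, edist (f (w (k + 1))) (f (w k))
      ≤ ∑ k ∈ Finset.range N, ∑ i, edist (f (w (k + 1)) i) (f (w k) i) :=
        Finset.sum_le_sum fun k _ => EuclideanSpace.edist_le_sum_edist _ _
    _ = ∑ i, ∑ k ∈ Finset.range N, edist (f (w (k + 1)) i) (f (w k) i) := Finset.sum_comm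
    _ ≤ ∑ i, eVariationOn (fun t => f t i) s :=
        Finset.sum_le_sum fun i _ => eVariationOn.sum_le hw hws

theorem eVariationOn.toReal_Icc_sub_toReal_Icc {α E : Type*} [LinearOrder α]
    [PseudoEMetricSpace E] (f : α → E) {a b x y : α} (hfin : eVariationOn f (Set.Icc a b) ≠ ⊤)
    (hax : a ≤ x) (hxy : x ≤ y) (hyb : y ≤ b) :
    (eVariationOn f (Set.Icc a y)).toReal - (eVariationOn f (Set.Icc a x)).toReal =
      (eVariationOn f (Set.Icc x y)).toReal := by
  have hadd := eVariationOn.Icc_add_Icc f hax hxy (Set.mem_univ x)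
  simp only [Set.univ_inter] at hadd
  have hfin' : ∀ {c d}, a ≤ c → d ≤ b → eVariationOn f (Set.Icc c d) ≠ ⊤ := fun hac hdb =>
    ne_top_of_le_ne_top hfin (eVariationOn.mono f (Set.Icc_subset_Icc hac hdb))
  rw [← hadd, ENNReal.toReal_add (hfin' le_rfl (hxy.trans hyb)) (hfin' hax hyb)]
  ring

theorem ENNReal.sum_iSup_le {ι : Type*} {κ : ι → Type*} [∀ i, Nonempty (κ i)] (s : Finset ι)
    {F : ∀ i, κ i → ℝ≥0∞} {c : ℝ≥0∞} (h : ∀ g : ∀ i, κ i, ∑ i ∈ s, F i (g i) ≤ c) :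
    ∑ i ∈ s, ⨆ j, F i j ≤ c := by
  classical
  suffices ∀ d, (∀ g : ∀ i, κ i, d + ∑ i ∈ s, F i (g i) ≤ c) → d + ∑ i ∈ s, ⨆ j, F i j ≤ c by
    simpa using this 0 (by simpa using h)
  clear h
  induction s using Finset.cons_induction with
  | empty => exact fun d hd => by simpa using hd fun _ => Classical.arbitrary _
  | cons i₀ s hi₀ ih =>
    intro d hd
    rw [Finset.sum_cons, ← add_assoc, ENNReal.add_iSup, ENNReal.iSup_add]
    refine iSup_le fun j => ih (d + F i₀ j) fun g => ?_
    have hs : ∑ i ∈ s, F i (Function.update g i₀ j i) = ∑ i ∈ s, F i (g i) :=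
      Finset.sum_congr rfl fun i hi => by
        rw [Function.update_of_ne (ne_of_mem_of_not_mem hi hi₀)]
    have := hd (Function.update g i₀ j)
    rwa [Finset.sum_cons, Function.update_self, hs, ← add_assoc] at this

def NonOverlappingIn (a b : ℝ) {n : ℕ} (u v : Fin n → ℝ) : Prop :=
  (∀ i, a ≤ u i ∧ u i ≤ v i ∧ v i ≤ b) ∧
    ∀ i j, i ≠ j → Set.Ioo (u i) (v i) ∩ Set.Ioo (u j) (v j) = ∅

theorem absContOn_iff {h : ℝ → ℝ} {a b : ℝ} :
    AbsContOn h a b ↔ ∀ ε > (0 : ℝ), ∃ δ > (0 : ℝ), ∀ n (u v : Fin n → ℝ),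
      NonOverlappingIn a b u v → ∑ i, (v i - u i) < δ → ∑ i, |h (v i) - h (u i)| < ε := by
  simp only [AbsContOn, NonOverlappingIn, and_imp]

theorem AbsContOn.of_abs_sub_le {g h : ℝ → ℝ} {a b : ℝ} (hg : AbsContOn g a b)
    (hle : ∀ x y, a ≤ x → x ≤ y → y ≤ b → |h y - h x| ≤ |g y - g x|) : AbsContOn h a b := by
  intro ε hε
  obtain ⟨δ, hδ, H⟩ := hg ε hε
  refine ⟨δ, hδ, fun n u v hmem hdisj hlen => ?_⟩
  exact (Finset.sum_le_sum fun i _ => hle _ _ (hmem i).1 (hmem i).2.1 (hmem i).2.2).trans_lt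
    (H n u v hmem hdisj hlen)

theorem Monotone.Ioo_inter_Ioo_succ_eq_empty {α : Type*} [LinearOrder α] {w : ℕ → α}
    (hw : Monotone w) {j k : ℕ} (hjk : j ≠ k) :
    Set.Ioo (w j) (w (j + 1)) ∩ Set.Ioo (w k) (w (k + 1)) = ∅ := by
  wlog h : j < k generalizing j k
  · rw [Set.inter_comm]
    exact this hjk.symm (by omega)
  rw [Set.Ioo_inter_Ioo]
  exact Set.Ioo_eq_empty (not_lt.2 (inf_le_left.trans ((hw h).trans le_sup_right)))

theorem NonOverlappingIn.exists_refinement {a b : ℝ} {n : ℕ} {u v : Fin n → ℝ}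
    (huv : NonOverlappingIn a b u v) (N : Fin n → ℕ) {w : Fin n → ℕ → ℝ}
    (hw : ∀ i, Monotone (w i)) (hwuv : ∀ i k, w i k ∈ Set.Icc (u i) (v i)) :
    ∃ (m : ℕ) (u' v' : Fin m → ℝ), NonOverlappingIn a b u' v' ∧
      ∀ G : ℝ → ℝ → ℝ,
        ∑ k, G (u' k) (v' k) = ∑ i, ∑ j ∈ Finset.range (N i), G (w i j) (w i (j + 1)) := by
  let e := (Fintype.equivFin ((i : Fin n) × Fin (N i))).symm
  have hdisj : ∀ p q : (i : Fin n) × Fin (N i), p ≠ q →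
      Set.Ioo (w p.1 p.2) (w p.1 (p.2 + 1)) ∩ Set.Ioo (w q.1 q.2) (w q.1 (q.2 + 1)) = ∅ := by
    rintro ⟨i, j⟩ ⟨i', j'⟩ hpq
    by_cases hii : i = i'
    · subst hii
      exact (hw i).Ioo_inter_Ioo_succ_eq_empty fun hjj => hpq (congrArg _ (Fin.ext hjj))
    · refine Set.subset_eq_empty (Set.inter_subset_inter ?_ ?_) (huv.2 i i' hii) <;>
        exact Set.Ioo_subset_Ioo (hwuv _ _).1 (hwuv _ _).2
  refine ⟨_, fun k => w (e k).1 (e k).2, fun k => w (e k).1 ((e k).2 + 1), ⟨fun k => ?_,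
    fun k l hkl => hdisj _ _ (e.injective.ne hkl)⟩, fun G => ?_⟩
  · exact ⟨(huv.1 _).1.trans (hwuv _ _).1, hw _ (Nat.le_succ _),
      (hwuv _ _).2.trans (huv.1 _).2.2⟩
  · rw [e.sum_comp (fun p => G (w p.1 p.2) (w p.1 (p.2 + 1))), Fintype.sum_sigma]
    exact Finset.sum_congr rfl fun i _ =>
      Fin.sum_univ_eq_sum_range (fun j => G (w i j) (w i (j + 1))) _

def HasAbsContVariationOn {E : Type*} [PseudoEMetricSpace E] (f : ℝ → E) (a b : ℝ) : Prop :=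
  ∀ ε > (0 : ℝ), ∃ δ > (0 : ℝ), ∀ n (u v : Fin n → ℝ), NonOverlappingIn a b u v →
    ∑ i, (v i - u i) < δ → ∑ i, eVariationOn f (Set.Icc (u i) (v i)) ≤ ENNReal.ofReal ε

theorem AbsContOn.hasAbsContVariationOn {h : ℝ → ℝ} {a b : ℝ} (hh : AbsContOn h a b) :
    HasAbsContVariationOn h a b := by
  intro ε hε
  obtain ⟨δ, hδ, H⟩ := absContOn_iff.1 hh ε hε
  refine ⟨δ, hδ, fun n u v huv hlen => ?_⟩
  have : ∀ i, Nonempty (ℕ × {w : ℕ → ℝ // Monotone w ∧ ∀ k, w k ∈ Set.Icc (u i) (v i)}) :=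
    fun i => ⟨(0, ⟨fun _ => u i, monotone_const, fun _ => ⟨le_rfl, (huv.1 i).2.1⟩⟩)⟩
  refine ENNReal.sum_iSup_le _ fun g => ?_
  obtain ⟨m, u', v', huv', hG⟩ :=
    huv.exists_refinement (fun i => (g i).1) (fun i => (g i).2.2.1) (fun i => (g i).2.2.2)
  have hlen' : ∑ k, (v' k - u' k) < δ := by
    rw [hG fun x y => y - x]
    refine lt_of_le_of_lt (Finset.sum_le_sum fun i _ => ?_) hlen
    rw [Finset.sum_range_sub]
    linarith [((g i).2.2.2 (g i).1).2, ((g i).2.2.2 0).1]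
  have hsum := H m u' v' huv' hlen'
  rw [hG fun x y => |h y - h x|] at hsum
  calc ∑ i, ∑ k ∈ Finset.range (g i).1, edist (h ((g i).2.1 (k + 1))) (h ((g i).2.1 k))
      = ENNReal.ofReal
          (∑ i, ∑ k ∈ Finset.range (g i).1, |h ((g i).2.1 (k + 1)) - h ((g i).2.1 k)|) := by
        simp only [edist_dist, Real.dist_eq]
        rw [ENNReal.ofReal_sum_of_nonneg fun _ _ => by positivity]
        exact Finset.sum_congr rfl fun i _ =>
          (ENNReal.ofReal_sum_of_nonneg fun _ _ => abs_nonneg _).symm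
    _ ≤ ENNReal.ofReal ε := ENNReal.ofReal_le_ofReal hsum.le

theorem hasAbsContVariationOn_of_forall_apply {M : ℕ} {f : ℝ → EuclideanSpace ℝ (Fin M)}
    {a b : ℝ} (hf : ∀ m, HasAbsContVariationOn (fun t => f t m) a b) :
    HasAbsContVariationOn f a b := by
  intro ε hε
  set ε' := ε / (M + 1)
  have hδ : ∀ m, ∀ᶠ δ in 𝓝[>] (0 : ℝ), ∀ n (u v : Fin n → ℝ), NonOverlappingIn a b u v →
      ∑ i, (v i - u i) < δ →
        ∑ i, eVariationOn (fun t => f t m) (Set.Icc (u i) (v i)) ≤ ENNReal.ofReal ε' := by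
    intro m
    obtain ⟨δ, hδ, H⟩ := hf m ε' (by positivity)
    filter_upwards [Ioo_mem_nhdsGT hδ] with δ' hδ' n u v huv hlen
    exact H n u v huv (hlen.trans hδ'.2)
  obtain ⟨δ, hδ, hδpos⟩ := ((Filter.eventually_all.2 hδ).and self_mem_nhdsWithin).exists
  refine ⟨δ, hδpos, fun n u v huv hlen => ?_⟩
  calc ∑ i, eVariationOn f (Set.Icc (u i) (v i))
      ≤ ∑ i, ∑ m, eVariationOn (fun t => f t m) (Set.Icc (u i) (v i)) :=
        Finset.sum_le_sum fun i _ => eVariationOn_le_sum_eVariationOn_apply f _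
    _ = ∑ m, ∑ i, eVariationOn (fun t => f t m) (Set.Icc (u i) (v i)) := Finset.sum_comm
    _ ≤ ∑ _m : Fin M, ENNReal.ofReal ε' := Finset.sum_le_sum fun m _ => hδ m n u v huv hlen
    _ = ENNReal.ofReal (M * ε') := by
        rw [← ENNReal.ofReal_sum_of_nonneg fun _ _ => by positivity]
        simp
    _ ≤ ENNReal.ofReal ε := by
        refine ENNReal.ofReal_le_ofReal ?_
        rw [mul_div_assoc', div_le_iff₀ (by positivity)]
        nlinarith

theorem HasAbsContVariationOn.absContOn_toReal_eVariationOn {E : Type*} [PseudoEMetricSpace E]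
    {f : ℝ → E} {a b : ℝ} (hf : HasAbsContVariationOn f a b)
    (hfin : eVariationOn f (Set.Icc a b) ≠ ⊤) :
    AbsContOn (fun x => (eVariationOn f (Set.Icc a x)).toReal) a b := by
  refine absContOn_iff.2 fun ε hε => ?_
  obtain ⟨δ, hδ, H⟩ := hf (ε / 2) (half_pos hε)
  refine ⟨δ, hδ, fun n u v huv hlen => ?_⟩
  have hfin' : ∀ i, eVariationOn f (Set.Icc (u i) (v i)) ≠ ⊤ := fun i =>
    ne_top_of_le_ne_top hfin (eVariationOn.mono f (Set.Icc_subset_Icc (huv.1 i).1 (huv.1 i).2.2))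
  calc ∑ i, |(eVariationOn f (Set.Icc a (v i))).toReal - (eVariationOn f (Set.Icc a (u i))).toReal|
      = ∑ i, (eVariationOn f (Set.Icc (u i) (v i))).toReal :=
        Finset.sum_congr rfl fun i _ => by
          obtain ⟨hau, huv, hvb⟩ := huv.1 i
          rw [eVariationOn.toReal_Icc_sub_toReal_Icc f hfin hau huv hvb,
            abs_of_nonneg ENNReal.toReal_nonneg]
    _ = (∑ i, eVariationOn f (Set.Icc (u i) (v i))).toReal :=
        (ENNReal.toReal_sum fun i _ => hfin' i).symm
    _ ≤ ε / 2 := ENNReal.toReal_le_of_le_ofReal (half_pos hε).le (H n u v huv hlen)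
    _ < ε := half_lt_self hε

theorem arcLength_absCont_iff_components_absCont_general {M : ℕ} (a b : ℝ)
    (f : ℝ → EuclideanSpace ℝ (Fin M))
    (hrect : curveLength f a b < ⊤) :
    AbsContOn (fun x => (curveLength f a x).toReal) a b ↔
      ∀ m : Fin M, AbsContOn (fun t => f t m) a b := by
  simp only [curveLength_eq_eVariationOn] at hrect ⊢
  constructor
  · refine fun hs m => hs.of_abs_sub_le fun x y hax hxy hyb => ?_
    calc |f y m - f x m| ≤ ‖f y - f x‖ := PiLp.norm_apply_le (f y - f x) m
      _ ≤ (eVariationOn f (Set.Icc x y)).toReal := by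
          rw [← dist_eq_norm, dist_edist]
          exact ENNReal.toReal_mono
            (ne_top_of_le_ne_top hrect.ne (eVariationOn.mono f (Set.Icc_subset_Icc hax hyb)))
            (eVariationOn.edist_le f (s := Set.Icc x y) ⟨hxy, le_rfl⟩ ⟨le_rfl, hxy⟩)
      _ = _ := (eVariationOn.toReal_Icc_sub_toReal_Icc f hrect.ne hax hxy hyb).symm
      _ ≤ _ := le_abs_self _
  · intro hf
    exact (hasAbsContVariationOn_of_forall_apply fun m => (hf m).hasAbsContVariationOn)
      |>.absContOn_toReal_eVariationOn hrect.ne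

/-- For a continuous rectifiable curve `C ↔ f : [a,b] → ℝ^M` with arc length
function `s(x) = ℓ(f on [a,x])`, `s` is absolutely continuous on `[a,b]` iff every
component of `f` is absolutely continuous on `[a,b]`. -/
theorem arcLength_absCont_iff_components_absCont {M : ℕ} (a b : ℝ) (hab : a < b)
    (f : ℝ → EuclideanSpace ℝ (Fin M))
    (hcont : ContinuousOn f (Set.Icc a b)) (hrect : curveLength f a b < ⊤) :
    AbsContOn (fun x => (curveLength f a x).toReal) a b ↔
      ∀ m : Fin M, AbsContOn (fun t => f t m) a b :=
  arcLength_absCont_iff_components_absCont_general a b f hrect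

end
end

section
/- Let C ↔ f : [a,b] → ℝ^M (a < b) be a continuous and rectifiable curve. Then the derivative f′(x) exists for (Lebesgue) almost every x ∈ [a,b], the function x ↦ ‖f′(x)‖ is Lebesgue integrable on [a,b], and ℓ(C) ≥ ∫_a^b ‖f′(x)‖ dx. -/
open scoped BigOperators ENNReal
open MeasureTheory Filter

noncomputable section

/-!
A rectifiable curve has bounded variation: the points of any monotone sampling of `[a,b]`,
together with `a` and `b`, form a partition whose inscribed sum dominates the sampled sum.
Writing `V x` for the variation of `f` on `[a,x]`, the increments satisfy
`‖f y - f x‖ ≤ V y - V x`, so `‖f'‖ ≤ V'` wherever both derivatives exist, which is almost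
everywhere. The derivative of the monotone function `V` is integrable with integral at most
`V b - V a`, the variation of `f` on `[a,b]`.
-/

open Set Topology

namespace IntervalPartition

def ofFinset {a b : ℝ} (T : Finset ℝ) (hT : (T : Set ℝ) ⊆ Icc a b) (ha : a ∈ T) (hb : b ∈ T) :
    IntervalPartition a b where
  n := T.card - 1
  x := T.orderEmbOfFin (Nat.sub_add_cancel (T.card_pos.2 ⟨a, ha⟩)).symm
  mono := (T.orderEmbOfFin _).strictMono
  first := (Finset.orderEmbOfFin_zero _ (Nat.succ_pos _)).trans
    (le_antisymm (T.min'_le a ha) (hT (T.min'_mem _)).1)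
  last := (Finset.orderEmbOfFin_last _ (Nat.succ_pos _)).trans
    (le_antisymm (hT (T.max'_mem _)).2 (T.le_max' b hb))

theorem range_ofFinset {a b : ℝ} (T : Finset ℝ) (hT : (T : Set ℝ) ⊆ Icc a b) (ha : a ∈ T)
    (hb : b ∈ T) : range (ofFinset T hT ha hb).x = T :=
  Finset.range_orderEmbOfFin _ _

end IntervalPartition

theorem eVariationOn_range_eq_inscribedSum {M : ℕ} (f : ℝ → EuclideanSpace ℝ (Fin M)) {a b : ℝ}
    (P : IntervalPartition a b) :
    eVariationOn f (range P.x) = ENNReal.ofReal (inscribedSum f P) := by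
  set u : ℕ → ℝ := fun k => P.x ⟨min k P.n, by omega⟩
  have hu : Monotone u := fun i j hij => P.mono.monotone (Fin.mk_le_mk.2 (min_le_min_right _ hij))
  have hrange : range P.x = u '' Iic P.n := by
    ext y
    constructor
    · rintro ⟨i, rfl⟩
      exact ⟨i, Fin.is_le i, by simp [u, min_eq_left (Fin.is_le i)]⟩
    · rintro ⟨k, -, rfl⟩
      exact ⟨_, rfl⟩
  rw [hrange, eVariationOn.image_range_of_monotone f hu, inscribedSum,
    ENNReal.ofReal_sum_of_nonneg (fun i _ => norm_nonneg _), ← Fin.sum_univ_eq_sum_range]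
  refine Finset.sum_congr rfl fun i _ => ?_
  have hi : u i = P.x i.castSucc := by simp only [u, min_eq_left i.is_lt.le]; rfl
  have hi' : u (i + 1) = P.x i.succ := by
    simp only [u, min_eq_left (Nat.succ_le_of_lt i.is_lt)]; rfl
  rw [hi, hi', edist_comm, edist_dist, dist_eq_norm]

theorem eVariationOn_le_curveLength {M : ℕ} (f : ℝ → EuclideanSpace ℝ (Fin M)) {a b : ℝ}
    (hab : a ≤ b) : eVariationOn f (Icc a b) ≤ curveLength f a b := by
  refine iSup_le fun ⟨n, u, hu, us⟩ => ?_
  set T : Finset ℝ := insert a (insert b ((Finset.range (n + 1)).image u))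
  have hT : (T : Set ℝ) ⊆ Icc a b := by
    intro y hy
    simp only [T, Finset.coe_insert, Finset.coe_image, mem_insert_iff, mem_image] at hy
    rcases hy with rfl | rfl | ⟨i, -, rfl⟩
    exacts [left_mem_Icc.2 hab, right_mem_Icc.2 hab, us i]
  let P := IntervalPartition.ofFinset T hT (by simp [T]) (by simp [T])
  calc ∑ i ∈ Finset.range n, edist (f (u (i + 1))) (f (u i))
      = eVariationOn f (u '' Iic n) := by
        simp only [eVariationOn.image_range_of_monotone f hu, edist_comm]
    _ ≤ eVariationOn f (range P.x) := by
        refine eVariationOn.mono f ?_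
        rw [IntervalPartition.range_ofFinset]
        rintro _ ⟨i, hi, rfl⟩
        simpa [T] using Or.inr (Or.inr ⟨i, hi, rfl⟩)
    _ = ENNReal.ofReal (inscribedSum f P) := eVariationOn_range_eq_inscribedSum f P
    _ ≤ curveLength f a b := le_iSup (fun P => ENNReal.ofReal (inscribedSum f P)) P

theorem variationOnFromTo.dist_le_sub {α E : Type*} [LinearOrder α] [PseudoMetricSpace E]
    {f : α → E} {s : Set α} (hf : LocallyBoundedVariationOn f s) {a x y : α} (ha : a ∈ s)
    (hx : x ∈ s) (hy : y ∈ s) (hxy : x ≤ y) :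
    dist (f x) (f y) ≤ variationOnFromTo f s a y - variationOnFromTo f s a x := by
  rw [variationOnFromTo.sub_right hf ha hy hx, variationOnFromTo.eq_of_le f s hxy, dist_edist]
  exact ENNReal.toReal_mono (hf x y hx hy)
    (eVariationOn.edist_le f ⟨hx, le_rfl, hxy⟩ ⟨hy, hxy, le_rfl⟩)

theorem norm_le_of_hasDerivAt_of_norm_sub_le {E : Type*} [NormedAddCommGroup E]
    [NormedSpace ℝ E] {f : ℝ → E} {g : ℝ → ℝ} {f' : E} {g' x : ℝ} (hf : HasDerivAt f f' x)
    (hg : HasDerivAt g g' x) (hfg : ∀ᶠ y in 𝓝[>] x, ‖f y - f x‖ ≤ g y - g x) : ‖f'‖ ≤ g' := by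
  have hx : x ∉ Ioi x := self_notMem_Ioi
  have hf_slope := (hasDerivWithinAt_iff_tendsto_slope' hx).1 hf.hasDerivWithinAt
  have hg_slope := (hasDerivWithinAt_iff_tendsto_slope' hx).1 hg.hasDerivWithinAt
  refine le_of_tendsto_of_tendsto hf_slope.norm hg_slope ?_
  filter_upwards [hfg, self_mem_nhdsWithin] with y hy (hxy : x < y)
  rw [slope_def_module, slope_def_field, norm_smul, norm_inv,
    Real.norm_of_nonneg (sub_pos.2 hxy).le, inv_mul_eq_div]
  exact div_le_div_of_nonneg_right hy (sub_pos.2 hxy).le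

theorem BoundedVariationOn.integrableOn_deriv_variationOnFromTo {E : Type*}
    [PseudoEMetricSpace E] {f : ℝ → E} {a b : ℝ} (hf : BoundedVariationOn f (Icc a b))
    (hab : a ≤ b) :
    IntegrableOn (deriv (variationOnFromTo f (Icc a b) a)) (Icc a b) := by
  set V := variationOnFromTo f (Icc a b) a
  have hV : MonotoneOn V (uIcc a b) := by
    rw [uIcc_of_le hab]
    exact variationOnFromTo.monotoneOn hf.locallyBoundedVariationOn (left_mem_Icc.2 hab)
  exact (intervalIntegrable_iff_integrableOn_Icc_of_le hab).1 hV.intervalIntegrable_deriv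

section FiniteDimensional

variable {E : Type*} [NormedAddCommGroup E] [NormedSpace ℝ E] [FiniteDimensional ℝ E]
  {f : ℝ → E} {a b : ℝ}

theorem BoundedVariationOn.ae_differentiableAt_of_mem_Icc
    (hf : BoundedVariationOn f (Icc a b)) :
    ∀ᵐ x, x ∈ Icc a b → DifferentiableAt ℝ f x := by
  rcases le_or_gt a b with hab | hba
  · rw [← uIcc_of_le hab] at hf ⊢
    exact hf.ae_differentiableAt_of_mem_uIcc
  · simp [Icc_eq_empty_of_lt hba]

theorem BoundedVariationOn.ae_norm_deriv_le_deriv_variationOnFromTo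
    (hf : BoundedVariationOn f (Icc a b)) (hab : a ≤ b) :
    ∀ᵐ x, x ∈ Icc a b → ‖deriv f x‖ ≤ deriv (variationOnFromTo f (Icc a b) a) x := by
  have ha : a ∈ Icc a b := left_mem_Icc.2 hab
  have hV := variationOnFromTo.monotoneOn hf.locallyBoundedVariationOn ha
  have hV_bv : BoundedVariationOn (variationOnFromTo f (Icc a b) a) (Icc a b) := by
    simpa using hV.locallyBoundedVariationOn a b ha (right_mem_Icc.2 hab)
  have hne_b : ∀ᵐ x : ℝ, x ≠ b := by simp [ae_iff, measure_singleton]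
  filter_upwards [hf.ae_differentiableAt_of_mem_Icc, hV_bv.ae_differentiableAt_of_mem_Icc, hne_b]
    with x hfx hVx hxb hx
  refine norm_le_of_hasDerivAt_of_norm_sub_le (hfx hx).hasDerivAt (hVx hx).hasDerivAt ?_
  filter_upwards [Ioo_mem_nhdsGT (lt_of_le_of_ne hx.2 hxb)] with y hy
  rw [← dist_eq_norm, dist_comm]
  exact variationOnFromTo.dist_le_sub hf.locallyBoundedVariationOn ha hx
    ⟨hx.1.trans hy.1.le, hy.2.le⟩ hy.1.le

theorem BoundedVariationOn.integrableOn_norm_deriv (hf : BoundedVariationOn f (Icc a b))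
    (hab : a ≤ b) : IntegrableOn (fun x => ‖deriv f x‖) (Icc a b) := by
  refine (hf.integrableOn_deriv_variationOnFromTo hab).mono'
    (stronglyMeasurable_deriv f).norm.aestronglyMeasurable ?_
  rw [ae_restrict_iff' measurableSet_Icc]
  filter_upwards [hf.ae_norm_deriv_le_deriv_variationOnFromTo hab] with x hx hx_mem
  rw [norm_norm]
  exact hx hx_mem

theorem BoundedVariationOn.integral_norm_deriv_le (hf : BoundedVariationOn f (Icc a b))
    (hab : a ≤ b) : ∫ x in Icc a b, ‖deriv f x‖ ≤ (eVariationOn f (Icc a b)).toReal := by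
  set V := variationOnFromTo f (Icc a b) a
  have hV : MonotoneOn V (uIcc a b) := by
    rw [uIcc_of_le hab]
    exact variationOnFromTo.monotoneOn hf.locallyBoundedVariationOn (left_mem_Icc.2 hab)
  calc ∫ x in Icc a b, ‖deriv f x‖ ≤ ∫ x in Icc a b, deriv V x := by
        refine setIntegral_mono_on_ae (hf.integrableOn_norm_deriv hab)
          (hf.integrableOn_deriv_variationOnFromTo hab) measurableSet_Icc ?_
        exact hf.ae_norm_deriv_le_deriv_variationOnFromTo hab
    _ = ∫ x in a..b, deriv V x := by
        rw [integral_Icc_eq_integral_Ioc, intervalIntegral.integral_of_le hab]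
    _ ≤ V b - V a := by
        have hmem := hV.intervalIntegral_deriv_mem_uIcc
        rw [uIcc_of_le (sub_nonneg.2 (hV left_mem_uIcc right_mem_uIcc hab))] at hmem
        exact hmem.2
    _ = (eVariationOn f (Icc a b)).toReal := by
        simp [V, variationOnFromTo.self, variationOnFromTo.eq_of_le f _ hab]

end FiniteDimensional

theorem integral_norm_deriv_le_length_general {M : ℕ} (a b : ℝ) (hab : a < b)
    (f : ℝ → EuclideanSpace ℝ (Fin M))
    (hrect : curveLength f a b < ⊤) :
    (∀ᵐ x ∂(volume : Measure ℝ), x ∈ Set.Icc a b → DifferentiableAt ℝ f x) ∧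
    IntegrableOn (fun x => ‖deriv f x‖) (Set.Icc a b) volume ∧
    ∫ x in Set.Icc a b, ‖deriv f x‖ ≤ (curveLength f a b).toReal := by
  have hvar := eVariationOn_le_curveLength f hab.le
  have hf : BoundedVariationOn f (Icc a b) := (hvar.trans_lt hrect).ne
  refine ⟨hf.ae_differentiableAt_of_mem_Icc, hf.integrableOn_norm_deriv hab.le, ?_⟩
  calc ∫ x in Icc a b, ‖deriv f x‖ ≤ (eVariationOn f (Icc a b)).toReal :=
        hf.integral_norm_deriv_le hab.le
    _ ≤ (curveLength f a b).toReal := ENNReal.toReal_mono hrect.ne hvar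

/-- For a continuous rectifiable curve `C ↔ f : [a,b] → ℝ^M`, `f′(x)` exists for
Lebesgue-a.e. `x ∈ [a,b]`, `x ↦ ‖f′(x)‖` is Lebesgue integrable on `[a,b]`, and
`ℓ(C) ≥ ∫_a^b ‖f′(x)‖ dx`. -/
theorem integral_norm_deriv_le_length {M : ℕ} (a b : ℝ) (hab : a < b)
    (f : ℝ → EuclideanSpace ℝ (Fin M))
    (hcont : ContinuousOn f (Set.Icc a b)) (hrect : curveLength f a b < ⊤) :
    (∀ᵐ x ∂(volume : Measure ℝ), x ∈ Set.Icc a b → DifferentiableAt ℝ f x) ∧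
    IntegrableOn (fun x => ‖deriv f x‖) (Set.Icc a b) volume ∧
    ∫ x in Set.Icc a b, ‖deriv f x‖ ≤ (curveLength f a b).toReal :=
  integral_norm_deriv_le_length_general a b hab f hrect
end
end
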